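/- arXiv:cs/0608103 — 2 statements merged into one kernel-verified Lean document; each statement's English description precedes it below -/
import Mathlib

section
/- Let P be a Horn ℱ-program and M a model of P. Then the result R of the canonical P-computation with respect to M (X₀ = ∅, Xₙ₊₁ = hset(P(Xₙ)) ∩ M, R = ⋃ₙ Xₙ) is the largest derivable model of P contained in M: R is a derivable model, R ⊆ M, and every derivable model M' of P with M' ⊆ M satisfies M' ⊆ R. -/
/-- An abstract-constraint clause: head constraint `hdC` over head set `hset`,
positive body literals `pos` and negated body literals `neg`, each a pair
(constraint, atom set). -/
structure ACClause (At : Type*) where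
  hdC : Set (Set At)
  hset : Set At
  pos : List (Set (Set At) × Set At)
  neg : List (Set (Set At) × Set At)

/-- M ⊨ C(X) iff M ∩ X ∈ C. -/
def satAtom {At : Type*} (M : Set At) (A : Set (Set At) × Set At) : Prop :=
  M ∩ A.2 ∈ A.1

def satBody {At : Type*} (M : Set At) (r : ACClause At) : Prop :=
  (∀ A ∈ r.pos, satAtom M A) ∧ (∀ A ∈ r.neg, ¬ satAtom M A)

def satHead {At : Type*} (M : Set At) (r : ACClause At) : Prop :=
  M ∩ r.hset ∈ r.hdC

/-- A constraint is monotone (upward closed). -/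
def MonoC {At : Type*} (C : Set (Set At)) : Prop :=
  ∀ A A' : Set At, A ∈ C → A ⊆ A' → A' ∈ C

def MonoClause {At : Type*} (r : ACClause At) : Prop :=
  MonoC r.hdC ∧ (∀ A ∈ r.pos, MonoC A.1) ∧ (∀ A ∈ r.neg, MonoC A.1)

/-- All atom sets of a clause are finite. -/
def FinClause {At : Type*} (r : ACClause At) : Prop :=
  r.hset.Finite ∧ (∀ A ∈ r.pos, A.2.Finite) ∧ (∀ A ∈ r.neg, A.2.Finite)

/-- The head constraint atom of `r` is consistent. -/
def ConsHead {At : Type*} (r : ACClause At) : Prop :=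
  ∃ M : Set At, satHead M r

def Models {At : Type*} (M : Set At) (P : Set (ACClause At)) : Prop :=
  ∀ r ∈ P, satBody M r → satHead M r

/-- The M-applicable clauses P(M). -/
def appl {At : Type*} (P : Set (ACClause At)) (M : Set At) : Set (ACClause At) :=
  {r ∈ P | satBody M r}

/-- hset(P(M)): union of head sets of M-applicable clauses. -/
def hsetP {At : Type*} (P : Set (ACClause At)) (M : Set At) : Set At :=
  ⋃ r ∈ appl P M, r.hset

/-- The nondeterministic one-step provability operator. -/
def Tnd {At : Type*} (P : Set (ACClause At)) (M : Set At) : Set (Set At) :=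
  {M' | M' ⊆ hsetP P M ∧ ∀ r ∈ appl P M, satHead M' r}

/-- A monotone ℱ-program: all constraints monotone, all atom sets finite. -/
def MonoProg {At : Type*} (P : Set (ACClause At)) : Prop :=
  ∀ r ∈ P, MonoClause r ∧ FinClause r

/-- A Horn ℱ-program: monotone, finite atom sets, no negation. -/
def Horn {At : Type*} (P : Set (ACClause At)) : Prop :=
  ∀ r ∈ P, r.neg = [] ∧ MonoClause r ∧ FinClause r

/-- A P-computation. -/
def IsComputation {At : Type*} (P : Set (ACClause At)) (t : ℕ → Set At) : Prop :=
  t 0 = ∅ ∧ ∀ n, t n ⊆ t (n + 1) ∧ t (n + 1) ∈ Tnd P (t n)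

/-- M is a derivable model of P: the result of some P-computation. -/
def Derivable {At : Type*} (P : Set (ACClause At)) (M : Set At) : Prop :=
  ∃ t, IsComputation P t ∧ M = ⋃ n, t n

def stripNeg {At : Type*} (r : ACClause At) : ACClause At :=
  { r with neg := [] }

/-- The reduct P^M. -/
def reduct {At : Type*} (P : Set (ACClause At)) (M : Set At) : Set (ACClause At) :=
  {r' | ∃ r ∈ P, (∀ A ∈ r.neg, ¬ satAtom M A) ∧ r' = stripNeg r}

/-- M is a stable model of P: M is a derivable model of the reduct P^M. -/
def Stable {At : Type*} (P : Set (ACClause At)) (M : Set At) : Prop :=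
  Derivable (reduct P M) M

/-- The canonical P-computation with respect to M. -/
def canon {At : Type*} (P : Set (ACClause At)) (M : Set At) : ℕ → Set At
  | 0 => ∅
  | n + 1 => hsetP P (canon P M n) ∩ M

/-- A definite head: the head set is a minimal element of the head constraint. -/
def DefHead {At : Type*} (r : ACClause At) : Prop :=
  r.hset ∈ r.hdC ∧ ∀ Y ∈ r.hdC, Y ⊆ r.hset → Y = r.hset

/-!
For a Horn program the operator `X ↦ hset(P(X))` is monotone. The canonical sequence
`Xₙ₊₁ = hset(P(Xₙ)) ∩ M` is therefore increasing, and it is a computation: every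
`Xₙ`-applicable clause is `M`-applicable, so its head holds in `M`, and its head set lies in
`hset(P(Xₙ))`, so `Xₙ₊₁` and `M` agree on it. Conversely, any computation `(Yₙ)` inside `M`
stays below the canonical one, since `Yₙ₊₁ ⊆ hset(P(Yₙ)) ∩ M ⊆ hset(P(Xₙ)) ∩ M` by induction.
-/

open Set

section

variable {At : Type*}

lemma satBody_mono {r : ACClause At} (hneg : r.neg = []) (hpos : ∀ A ∈ r.pos, MonoC A.1)
    {X Y : Set At} (hXY : X ⊆ Y) (h : satBody X r) : satBody Y r :=
  ⟨fun A hA => hpos A hA _ _ (h.1 A hA) (inter_subset_inter_left _ hXY),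
    fun A hA => by simp [hneg] at hA⟩

lemma satHead_inter_iff {r : ACClause At} {H M : Set At} (hH : r.hset ⊆ H) :
    satHead (H ∩ M) r ↔ satHead M r := by
  unfold satHead
  rw [inter_right_comm, inter_eq_right.mpr hH, inter_comm]

lemma hset_subset_hsetP {P : Set (ACClause At)} {X : Set At} {r : ACClause At}
    (hr : r ∈ appl P X) : r.hset ⊆ hsetP P X :=
  subset_iUnion₂_of_subset r hr subset_rfl

lemma canon_subset (P : Set (ACClause At)) (M : Set At) : ∀ n, canon P M n ⊆ M
  | 0 => empty_subset _
  | _ + 1 => inter_subset_right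

namespace Horn

variable {P : Set (ACClause At)}

lemma satBody_mono (hP : Horn P) {r : ACClause At} (hr : r ∈ P) {X Y : Set At}
    (hXY : X ⊆ Y) (h : satBody X r) : satBody Y r :=
  _root_.satBody_mono (hP r hr).1 (hP r hr).2.1.2.1 hXY h

lemma hsetP_mono (hP : Horn P) {X Y : Set At} (hXY : X ⊆ Y) : hsetP P X ⊆ hsetP P Y :=
  iUnion₂_subset fun _ hr => hset_subset_hsetP ⟨hr.1, hP.satBody_mono hr.1 hXY hr.2⟩

lemma canon_subset_succ (hP : Horn P) (M : Set At) : ∀ n, canon P M n ⊆ canon P M (n + 1)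
  | 0 => empty_subset _
  | n + 1 => inter_subset_inter_left _ (hP.hsetP_mono (hP.canon_subset_succ M n))

lemma canon_succ_mem_Tnd (hP : Horn P) {M : Set At} (hM : Models M P) (n : ℕ) :
    canon P M (n + 1) ∈ Tnd P (canon P M n) := by
  refine ⟨inter_subset_left, fun r hr => ?_⟩
  have hbodyM : satBody M r := hP.satBody_mono hr.1 (canon_subset P M n) hr.2
  exact (satHead_inter_iff (hset_subset_hsetP hr)).mpr (hM r hr.1 hbodyM)

lemma isComputation_canon (hP : Horn P) {M : Set At} (hM : Models M P) :
    IsComputation P (canon P M) :=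
  ⟨rfl, fun n => ⟨hP.canon_subset_succ M n, hP.canon_succ_mem_Tnd hM n⟩⟩

lemma subset_canon_of_isComputation (hP : Horn P) {M : Set At} {t : ℕ → Set At}
    (ht : IsComputation P t) (htM : ⋃ n, t n ⊆ M) : ∀ n, t n ⊆ canon P M n
  | 0 => ht.1.subset
  | n + 1 => fun _ ha =>
    ⟨hP.hsetP_mono (hP.subset_canon_of_isComputation ht htM n) ((ht.2 n).2.1 ha),
      htM (mem_iUnion_of_mem (n + 1) ha)⟩

end Horn

end

theorem stmt8 {At : Type*} (P : Set (ACClause At)) (hP : Horn P)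
    (M : Set At) (hM : Models M P) :
    Derivable P (⋃ n, canon P M n) ∧ (⋃ n, canon P M n) ⊆ M ∧
      ∀ M' : Set At, Derivable P M' → M' ⊆ M → M' ⊆ ⋃ n, canon P M n := by
  refine ⟨⟨canon P M, hP.isComputation_canon hM, rfl⟩, iUnion_subset (canon_subset P M), ?_⟩
  rintro _ ⟨t, ht, rfl⟩ htM
  exact iUnion_mono (hP.subset_canon_of_isComputation ht htM)
end

section
/- Let P be a definite Horn ℱ-program. Then P has exactly one derivable model, and this model is the least model of P. -/
lemma satBody_mono' {At : Type*} {P : Set (ACClause At)} (hP : Horn P) {r : ACClause At}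
    (hr : r ∈ P) {M M' : Set At} (h : M ⊆ M') (hb : satBody M r) : satBody M' r := by
  obtain ⟨hneg, hmono, _⟩ := hP r hr
  refine ⟨fun A hA => ?_, by simp [hneg]⟩
  exact hmono.2.1 A hA _ _ (hb.1 A hA) (Set.inter_subset_inter_left _ h)

lemma hsetP_mono' {At : Type*} {P : Set (ACClause At)} (hP : Horn P) {M M' : Set At}
    (h : M ⊆ M') : hsetP P M ⊆ hsetP P M' := by
  intro a ha
  simp only [hsetP, Set.mem_iUnion] at ha ⊢
  obtain ⟨r, hr, har⟩ := ha
  exact ⟨r, ⟨hr.1, satBody_mono' hP hr.1 h hr.2⟩, har⟩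

lemma Tnd_eq' {At : Type*} {P : Set (ACClause At)} (hdef : ∀ r ∈ P, DefHead r)
    (M : Set At) : Tnd P M = {hsetP P M} := by
  ext M'
  simp only [Set.mem_singleton_iff, Tnd, Set.mem_setOf_eq]
  constructor
  · rintro ⟨hsub, hhead⟩
    refine Set.Subset.antisymm hsub ?_
    intro a ha
    simp only [hsetP, Set.mem_iUnion] at ha
    obtain ⟨r, hr, har⟩ := ha
    have h1 : M' ∩ r.hset ∈ r.hdC := hhead r hr
    have h2 : M' ∩ r.hset = r.hset :=
      (hdef r hr.1).2 _ h1 Set.inter_subset_right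
    have : r.hset ⊆ M' := by rw [← h2]; exact Set.inter_subset_left
    exact this har
  · rintro rfl
    refine ⟨subset_rfl, fun r hr => ?_⟩
    have hsub : r.hset ⊆ hsetP P M := Set.subset_biUnion_of_mem hr
    unfold satHead
    rw [Set.inter_eq_right.mpr hsub]
    exact (hdef r hr.1).1

/-- The canonical iteration for a definite program. -/
def iterP {At : Type*} (P : Set (ACClause At)) : ℕ → Set At
  | 0 => ∅
  | n + 1 => hsetP P (iterP P n)

lemma iterP_mono {At : Type*} {P : Set (ACClause At)} (hP : Horn P) :
    Monotone (iterP P) := by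
  apply monotone_nat_of_le_succ
  intro n
  induction n with
  | zero => exact Set.empty_subset _
  | succ n ih => exact hsetP_mono' hP ih

lemma finite_subset_chain {At : Type*} {f : ℕ → Set At} (hf : Monotone f)
    {S : Set At} (hS : S.Finite) (h : S ⊆ ⋃ n, f n) : ∃ n, S ⊆ f n := by
  revert h
  refine Set.Finite.induction_on (motive := fun S _ => S ⊆ (⋃ n, f n) → ∃ n, S ⊆ f n) S hS
    (fun _ => ⟨0, Set.empty_subset _⟩) ?_
  intro a S _ _ ih h
  obtain ⟨n, hn⟩ := ih (subset_trans (Set.subset_insert a S) h)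
  obtain ⟨m, hm⟩ := Set.mem_iUnion.mp (h (Set.mem_insert a S))
  exact ⟨max m n, Set.insert_subset (hf (le_max_left m n) hm)
    (hn.trans (hf (le_max_right m n)))⟩

theorem stmt18 {At : Type*} (P : Set (ACClause At)) (hP : Horn P)
    (hdef : ∀ r ∈ P, DefHead r) :
    ∃ M : Set At, Derivable P M ∧ (∀ M' : Set At, Derivable P M' → M' = M) ∧
      Models M P ∧ ∀ N : Set At, Models N P → M ⊆ N := by
  set M : Set At := ⋃ n, iterP P n with hM
  have hmono := iterP_mono (P := P) hP
  have hcomp : IsComputation P (iterP P) := by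
    refine ⟨rfl, fun n => ⟨hmono n.le_succ, ?_⟩⟩
    rw [Tnd_eq' hdef]
    rfl
  have huniq : ∀ t, IsComputation P t → ∀ n, t n = iterP P n := by
    intro t ⟨ht0, hts⟩ n
    induction n with
    | zero => exact ht0
    | succ n ih =>
      have := (hts n).2
      rw [Tnd_eq' hdef, ih] at this
      exact this
  refine ⟨M, ⟨iterP P, hcomp, rfl⟩, ?_, ?_, ?_⟩
  · rintro M' ⟨t, ht, rfl⟩
    rw [hM]
    exact Set.iUnion_congr (huniq t ht)
  · -- Models M P
    intro r hr hb
    obtain ⟨hneg, hmc, hfc⟩ := hP r hr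
    -- find a stage n with satBody (iterP P n) r
    set S : Set At := ⋃ A ∈ r.pos, (M ∩ A.2) with hS
    have hSfin : S.Finite :=
      Set.Finite.biUnion (List.finite_toSet r.pos)
        (fun A hA => ((hfc.2.1 A hA).inter_of_right M))
    have hSsub : S ⊆ M := by
      simp only [hS, Set.iUnion_subset_iff]
      exact fun A _ => Set.inter_subset_left
    obtain ⟨n, hn⟩ := finite_subset_chain hmono hSfin hSsub
    have hbn : satBody (iterP P n) r := by
      refine ⟨fun A hA => ?_, by simp [hneg]⟩
      have h1 : M ∩ A.2 ⊆ iterP P n ∩ A.2 := by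
        intro x hx
        exact ⟨hn (Set.mem_biUnion hA hx), hx.2⟩
      exact hmc.2.1 A hA _ _ (hb.1 A hA) h1
    have hsub : r.hset ⊆ iterP P (n + 1) :=
      Set.subset_biUnion_of_mem (u := fun r : ACClause At => r.hset)
        (show r ∈ appl P (iterP P n) from ⟨hr, hbn⟩)
    have hsubM : r.hset ⊆ M := hsub.trans (Set.subset_iUnion (iterP P) (n + 1))
    unfold satHead
    rw [Set.inter_eq_right.mpr hsubM]
    exact (hdef r hr).1
  · -- least model
    intro N hN
    rw [hM]
    refine Set.iUnion_subset fun n => ?_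
    induction n with
    | zero => exact Set.empty_subset _
    | succ n ih =>
      refine Set.iUnion₂_subset fun r hr => ?_
      have hbN : satBody N r := satBody_mono' hP hr.1 ih hr.2
      have hhd : N ∩ r.hset ∈ r.hdC := hN r hr.1 hbN
      have := (hdef r hr.1).2 _ hhd Set.inter_subset_right
      rw [← this]
      exact Set.inter_subset_left
end
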